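/- Let S = (P, L) be a generalized quadrangle of order (2,t), let (R, ψ) be a faithful representation of S, and let a, b be two non-collinear points of P. Set A = {r_a r_x : x ∈ P, x ≠ a, x not collinear with a} and B = {r_b r_x : x ∈ P, x ≠ b, x not collinear with b}, viewed as subsets of R. Then |A ∩ B| = t + 2. -/

import Mathlib

open scoped Classical

/-- A slim partial linear space: a nonempty point set, a nonempty collection of
lines each of which is a 3-element set of points, such that any two distinct
points lie in at most one common line. -/
structure SlimPLS (P : Type*) where
  lines : Set (Finset P)
  nonempty_pts : Nonempty P
  nonempty_lines : lines.Nonempty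
  three_points : ∀ l ∈ lines, l.card = 3
  unique_line : ∀ l₁ ∈ lines, ∀ l₂ ∈ lines, ∀ x y : P,
    x ≠ y → x ∈ l₁ → y ∈ l₁ → x ∈ l₂ → y ∈ l₂ → l₁ = l₂

namespace SlimPLS

variable {P : Type*}

/-- Two points are collinear if they are distinct and lie on a common line. -/
def Collinear (S : SlimPLS P) (x y : P) : Prop :=
  x ≠ y ∧ ∃ l ∈ S.lines, x ∈ l ∧ y ∈ l

/-- The collinearity graph of a slim partial linear space. -/
def graph (S : SlimPLS P) : SimpleGraph P where
  Adj x y := S.Collinear x y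
  symm := ⟨fun x y h => ⟨Ne.symm h.1, h.2.elim fun l hl => ⟨l, hl.1, hl.2.2, hl.2.1⟩⟩⟩
  loopless := ⟨fun x h => h.1 rfl⟩

/-- `S` is a generalized quadrangle of order `(2, t)`: it is connected, no point
is collinear with all other points, every point is on exactly `t+1` lines, and
for every point `x` and line `l` with `x ∉ l` there is exactly one point of `l`
collinear with `x`. -/
def IsGQ (S : SlimPLS P) (t : ℕ) : Prop :=
  S.graph.Connected ∧
  (∀ x : P, ∃ y : P, y ≠ x ∧ ¬ S.Collinear x y) ∧
  (∀ x : P, {l | l ∈ S.lines ∧ x ∈ l}.ncard = t + 1) ∧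
  (∀ x : P, ∀ l ∈ S.lines, x ∉ l → ∃! y : P, y ∈ l ∧ S.Collinear x y)

/-- A set of points is an arc if its points are pairwise non-collinear. -/
def IsArc (S : SlimPLS P) (T : Set P) : Prop :=
  ∀ x ∈ T, ∀ y ∈ T, x ≠ y → ¬ S.Collinear x y

/-- `{a,b,c}` is a complete 3-arc: three pairwise distinct, pairwise
non-collinear points not contained in a 4-arc. -/
def Complete3Arc (S : SlimPLS P) (a b c : P) : Prop :=
  a ≠ b ∧ a ≠ c ∧ b ≠ c ∧ S.IsArc {a, b, c} ∧
  ∀ d : P, d ∉ ({a, b, c} : Set P) → ¬ S.IsArc (insert d {a, b, c})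

/-- `{a,b,c}` is a complete 3-arc of the subset `Q`: three pairwise distinct,
pairwise non-collinear points of `Q` not contained in a 4-arc inside `Q`. -/
def Complete3ArcIn (S : SlimPLS P) (Q : Set P) (a b c : P) : Prop :=
  a ∈ Q ∧ b ∈ Q ∧ c ∈ Q ∧ a ≠ b ∧ a ≠ c ∧ b ≠ c ∧ S.IsArc {a, b, c} ∧
  ∀ d ∈ Q, d ∉ ({a, b, c} : Set P) → ¬ S.IsArc (insert d {a, b, c})

/-- `Q` is a sub-generalized-quadrangle of order `(2,t)` of `S`: together with
the lines of `S` contained in it, `Q` is a `(2,t)`-GQ; in particular any line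
meeting `Q` in at least two points is contained in `Q`. -/
def IsSubGQ (S : SlimPLS P) (Q : Set P) (t : ℕ) : Prop :=
  Q.Nonempty ∧
  (∃ l ∈ S.lines, (l : Set P) ⊆ Q) ∧
  (∀ l ∈ S.lines, ∀ x ∈ l, ∀ y ∈ l, x ≠ y → x ∈ Q → y ∈ Q → (l : Set P) ⊆ Q) ∧
  (SimpleGraph.induce Q S.graph).Connected ∧
  (∀ x ∈ Q, ∃ y ∈ Q, y ≠ x ∧ ¬ S.Collinear x y) ∧
  (∀ x ∈ Q, {l | l ∈ S.lines ∧ x ∈ l ∧ (l : Set P) ⊆ Q}.ncard = t + 1) ∧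
  (∀ x ∈ Q, ∀ l ∈ S.lines, (l : Set P) ⊆ Q → x ∉ l → ∃! y : P, y ∈ l ∧ S.Collinear x y)

/-- `S` is a near hexagon: connected of diameter 3, no point collinear with all
other points, and for every point `x` and line `l` there is a unique point of
`l` nearest to `x`. -/
def IsNearHexagon (S : SlimPLS P) : Prop :=
  S.graph.Connected ∧
  (∀ x y : P, S.graph.dist x y ≤ 3) ∧
  (∃ x y : P, S.graph.dist x y = 3) ∧
  (∀ x : P, ∃ y : P, y ≠ x ∧ ¬ S.Collinear x y) ∧
  (∀ x : P, ∀ l ∈ S.lines, ∃! y : P, y ∈ l ∧ ∀ z ∈ l, S.graph.dist x y ≤ S.graph.dist x z)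

/-- `S` is dense: any two points at distance 2 have at least two common
neighbours. -/
def IsDense (S : SlimPLS P) : Prop :=
  ∀ x y : P, S.graph.dist x y = 2 →
    ∃ u v : P, u ≠ v ∧ S.Collinear x u ∧ S.Collinear u y ∧ S.Collinear x v ∧ S.Collinear v y

/-- `Q` is a quad: a convex subset of diameter 2 in which no point is collinear
with all other points of `Q`. -/
def IsQuad (S : SlimPLS P) (Q : Set P) : Prop :=
  (∀ u ∈ Q, ∀ v ∈ Q, ∀ w : P,
      S.graph.dist u w + S.graph.dist w v = S.graph.dist u v → w ∈ Q) ∧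
  (∀ u ∈ Q, ∀ v ∈ Q, S.graph.dist u v ≤ 2) ∧
  (∃ u ∈ Q, ∃ v ∈ Q, S.graph.dist u v = 2) ∧
  (∀ u ∈ Q, ∃ v ∈ Q, v ≠ u ∧ ¬ S.Collinear u v)

/-- A quad `Q` is of type `(2, t₂)` if every point of `Q` lies on exactly
`t₂ + 1` lines contained in `Q`. -/
def QuadType (S : SlimPLS P) (Q : Set P) (t₂ : ℕ) : Prop :=
  ∀ x ∈ Q, {l | l ∈ S.lines ∧ x ∈ l ∧ (l : Set P) ⊆ Q}.ncard = t₂ + 1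

/-- The point-quad pair `(x, Q)` is classical: there is a unique point `y ∈ Q`
nearest to `x`, with `d(x,z) = d(x,y) + d(y,z)` for all `z ∈ Q`. -/
def IsClassicalPair (S : SlimPLS P) (x : P) (Q : Set P) : Prop :=
  ∃! y : P, y ∈ Q ∧ ∀ z ∈ Q, S.graph.dist x z = S.graph.dist x y + S.graph.dist y z

/-- A quad is classical (big) if every point-quad pair with it is classical. -/
def IsClassicalQuad (S : SlimPLS P) (Q : Set P) : Prop :=
  ∀ x : P, S.IsClassicalPair x Q

/-- A subspace: any line containing two of its points is contained in it. -/
def IsSubspace (S : SlimPLS P) (X : Set P) : Prop :=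
  ∀ l ∈ S.lines, ∀ x ∈ l, ∀ y ∈ l, x ≠ y → x ∈ X → y ∈ X → (l : Set P) ⊆ X

/-- The subspace generated by a set of points. -/
def subspaceGen (S : SlimPLS P) (A : Set P) : Set P :=
  ⋂₀ {X | S.IsSubspace X ∧ A ⊆ X}

/-- `NPdim S` is the rank over `F₂` of the distance-3 adjacency matrix. -/
noncomputable def NPdim [Fintype P] (S : SlimPLS P) : ℕ :=
  Matrix.rank (Matrix.of fun x y : P => if S.graph.dist x y = 3 then (1 : ZMod 2) else 0)

/-- `dimV S` is the dimension of the universal representation module of `S`: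
the free `F₂`-vector space on the points modulo the span of the elements
`v_x + v_y + v_z` for the lines `{x,y,z}`. -/
noncomputable def dimV (S : SlimPLS P) : ℕ :=
  Module.finrank (ZMod 2)
    ((P →₀ ZMod 2) ⧸ Submodule.span (ZMod 2)
      {f : P →₀ ZMod 2 | ∃ l ∈ S.lines, f = ∑ x ∈ l, Finsupp.single x 1})

end SlimPLS

/-- A representation of a slim partial linear space `S`: an assignment of an
order-2 element `r x` of `R` to each point `x`, such that the images generate
`R` and for every line `{x,y,z}` the set `{1, r x, r y, r z}` is a Klein four
subgroup (`r x * r y = r z` for the three pairwise distinct points of a line). -/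
structure SlimPLS.Rep {P : Type*} (S : SlimPLS P) (R : Type*) [Group R] where
  r : P → R
  order_two : ∀ x : P, orderOf (r x) = 2
  gen : Subgroup.closure (Set.range r) = ⊤
  line_rel : ∀ l ∈ S.lines, ∀ x ∈ l, ∀ y ∈ l, ∀ z ∈ l,
    x ≠ y → x ≠ z → y ≠ z → r x * r y = r z

/-- A finite 2-group is extraspecial if its Frattini subgroup, commutator
subgroup and center coincide and have order 2. -/
def IsExtraspecial (G : Type*) [Group G] : Prop :=
  Finite G ∧ IsPGroup 2 G ∧ frattini G = commutator G ∧
    commutator G = Subgroup.center G ∧ Nat.card (Subgroup.center G) = 2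

/-!
The images of two non-collinear points `p, q` commute: two common neighbours `c₁, c₂` of `p, q`
span a 3 × 3 grid, whose third row and column meet in a point `m`, and reading `r_m` off both
gives `r_p r_{c₁} r_q r_{c₂} = r_q r_{c₁} r_p r_{c₂}`. So `R` is abelian of exponent 2, and
`r_a r_x = r_b r_y` means `r_a r_b r_x r_y = 1`, a relation symmetric in the four points.

For `a ≁ b`, `x ≁ a` and `y ≁ b`, faithfulness then forces `x = b` or `x ∼ b`. If two of the
four points are collinear, the relation shortens to one of the form `r_p r_q = r_w`, which puts
`p` and `q` on a line. If they are pairwise non-collinear, replacing `a, b` by the third points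
of their lines to a common neighbour `c` keeps `r_a r_b` and again gives a shorter relation,
unless `x` and `y` are collinear with every common neighbour of `a, b`; there two such
neighbours are used at once. Hence `A ∩ B = r_a · ({b} ∪ N)` with `N` the points collinear with
`b` but not with `a`, and `N` has one point on each of the `t + 1` lines through `b`.
-/

namespace SlimPLS

variable {P : Type*} {S : SlimPLS P} {t : ℕ} {a b c u v w x y z : P}

theorem Collinear.ne (h : S.Collinear x y) : x ≠ y := h.1

theorem Collinear.symm (h : S.Collinear x y) : S.Collinear y x :=
  (S.graph.adj_symm h :)

theorem collinear_comm : S.Collinear x y ↔ S.Collinear y x :=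
  ⟨Collinear.symm, Collinear.symm⟩

def Opposite (S : SlimPLS P) (x y : P) : Prop :=
  x ≠ y ∧ ¬ S.Collinear x y

theorem Opposite.symm (h : S.Opposite x y) : S.Opposite y x :=
  ⟨h.1.symm, fun h' => h.2 h'.symm⟩

def IsLine (S : SlimPLS P) (x y z : P) : Prop :=
  x ≠ y ∧ x ≠ z ∧ y ≠ z ∧ ({x, y, z} : Finset P) ∈ S.lines

namespace IsLine

theorem swap (h : S.IsLine x y z) : S.IsLine y x z := by
  obtain ⟨hxy, hxz, hyz, hl⟩ := h
  exact ⟨hxy.symm, hyz, hxz, by rwa [Finset.insert_comm]⟩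

theorem rotate (h : S.IsLine x y z) : S.IsLine y z x := by
  obtain ⟨hxy, hxz, hyz, hl⟩ := h
  refine ⟨hyz, hxy.symm, hxz.symm, ?_⟩
  convert hl using 1
  ext
  simp only [Finset.mem_insert, Finset.mem_singleton]
  tauto

theorem collinear (h : S.IsLine x y z) : S.Collinear x y :=
  ⟨h.1, _, h.2.2.2, by simp, by simp⟩

theorem collinear_right (h : S.IsLine x y z) : S.Collinear y z :=
  h.rotate.collinear

theorem collinear_left (h : S.IsLine x y z) : S.Collinear z x :=
  h.rotate.rotate.collinear

theorem unique {z' : P} (h : S.IsLine x y z) (h' : S.IsLine x y z') : z = z' := by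
  have hl := S.unique_line _ h.2.2.2 _ h'.2.2.2 x y h.1 (by simp) (by simp) (by simp) (by simp)
  have hz : z ∈ ({x, y, z'} : Finset P) := hl ▸ by simp
  simp only [Finset.mem_insert, Finset.mem_singleton] at hz
  exact hz.resolve_left h.2.1.symm |>.resolve_left h.2.2.1.symm

end IsLine

theorem isLine_of_mem {l : Finset P} (hl : l ∈ S.lines) (hx : x ∈ l) (hy : y ∈ l)
    (hxy : x ≠ y) : ∃ z, S.IsLine x y z ∧ l = {x, y, z} := by
  have hy' : y ∈ l.erase x := Finset.mem_erase.2 ⟨hxy.symm, hy⟩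
  have hcard : ((l.erase x).erase y).card = 1 := by
    rw [Finset.card_erase_of_mem hy', Finset.card_erase_of_mem hx, S.three_points l hl]
  obtain ⟨z, hz⟩ := Finset.card_eq_one.1 hcard
  have hzl : z ∈ (l.erase x).erase y := hz ▸ Finset.mem_singleton_self z
  have hl_eq : l = {x, y, z} := by
    rw [← Finset.insert_erase hx, ← Finset.insert_erase hy', hz]
  simp only [Finset.mem_erase] at hzl
  exact ⟨z, ⟨hxy, hzl.2.1.symm, hzl.1.symm, hl_eq ▸ hl⟩, hl_eq⟩

theorem Collinear.exists_isLine (h : S.Collinear x y) : ∃ z, S.IsLine x y z := by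
  obtain ⟨hxy, l, hl, hx, hy⟩ := h
  obtain ⟨z, hz, -⟩ := isLine_of_mem hl hx hy hxy
  exact ⟨z, hz⟩

theorem IsGQ.ncard_lines (hGQ : S.IsGQ t) (x : P) :
    {l | l ∈ S.lines ∧ x ∈ l}.ncard = t + 1 :=
  hGQ.2.2.1 x

theorem IsGQ.existsUnique_collinear (hGQ : S.IsGQ t) {l : Finset P} (hl : l ∈ S.lines)
    (hx : x ∉ l) : ∃! y, y ∈ l ∧ S.Collinear x y :=
  hGQ.2.2.2 x l hl hx

theorem IsGQ.exists_line (hGQ : S.IsGQ t) (x : P) : ∃ l ∈ S.lines, x ∈ l := by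
  obtain ⟨l, hl⟩ := Set.nonempty_of_ncard_ne_zero (by rw [hGQ.ncard_lines x]; omega)
  exact ⟨l, hl⟩

theorem IsLine.eq_of_collinear (hGQ : S.IsGQ t) (h : S.IsLine x y z)
    (hx : S.Collinear w x) (hy : S.Collinear w y) : w = z := by
  by_contra hwz
  have hw : w ∉ ({x, y, z} : Finset P) := by
    simp only [Finset.mem_insert, Finset.mem_singleton, not_or]
    exact ⟨hx.ne, hy.ne, hwz⟩
  obtain ⟨u, -, hu⟩ := hGQ.existsUnique_collinear h.2.2.2 hw
  exact h.1 ((hu x ⟨by simp, hx⟩).trans (hu y ⟨by simp, hy⟩).symm)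

theorem IsLine.collinear_of_not_collinear (hGQ : S.IsGQ t) (h : S.IsLine x y z)
    (hx : ¬ S.Collinear w x) (hy : ¬ S.Collinear w y) : S.Collinear w z := by
  have hw : w ∉ ({x, y, z} : Finset P) := by
    simp only [Finset.mem_insert, Finset.mem_singleton, not_or]
    exact ⟨fun e => hy (e ▸ h.collinear), fun e => hx (e ▸ h.collinear.symm),
      fun e => hx (e ▸ h.collinear_left)⟩
  obtain ⟨u, ⟨hu, hwu⟩, -⟩ := hGQ.existsUnique_collinear h.2.2.2 hw
  simp only [Finset.mem_insert, Finset.mem_singleton] at hu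
  rcases hu with rfl | rfl | rfl
  exacts [absurd hwu hx, absurd hwu hy, hwu]

theorem IsGQ.one_le (hGQ : S.IsGQ t) : 1 ≤ t := by
  obtain ⟨x⟩ := S.nonempty_pts
  obtain ⟨y, hyx, hxy⟩ := hGQ.2.1 x
  obtain ⟨l, hl, hyl⟩ := hGQ.exists_line y
  have hxl : x ∉ l := fun hxl => hxy ⟨hyx.symm, l, hl, hxl, hyl⟩
  obtain ⟨c, ⟨hcl, hxc, l', hl', hxl', hcl'⟩, -⟩ := hGQ.existsUnique_collinear hl hxl
  have htwo : 1 < {m | m ∈ S.lines ∧ c ∈ m}.ncard := by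
    refine (Set.one_lt_ncard (Set.finite_of_ncard_ne_zero ?_)).2
      ⟨l, ⟨hl, hcl⟩, l', ⟨hl', hcl'⟩, fun e => hxl (e ▸ hxl')⟩
    rw [hGQ.ncard_lines]
    omega
  rw [hGQ.ncard_lines] at htwo
  omega

theorem IsGQ.exists_two_lines (hGQ : S.IsGQ t) (x : P) :
    ∃ l₁ ∈ S.lines, ∃ l₂ ∈ S.lines, x ∈ l₁ ∧ x ∈ l₂ ∧ l₁ ≠ l₂ := by
  have h : 1 < {l | l ∈ S.lines ∧ x ∈ l}.ncard := by
    rw [hGQ.ncard_lines]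
    have := hGQ.one_le
    omega
  obtain ⟨l₁, hl₁, l₂, hl₂, hne⟩ := (Set.one_lt_ncard (Set.finite_of_ncard_pos
    (by omega))).1 h
  exact ⟨l₁, hl₁.1, l₂, hl₂.1, hl₁.2, hl₂.2, hne⟩

theorem Opposite.exists_common_neighbour_mem (hGQ : S.IsGQ t) (hab : S.Opposite a b)
    {l : Finset P} (hl : l ∈ S.lines) (hbl : b ∈ l) :
    ∃ c ∈ l, S.Collinear a c ∧ S.Collinear b c := by
  have hal : a ∉ l := fun hal => hab.2 ⟨hab.1, l, hl, hal, hbl⟩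
  obtain ⟨c, ⟨hcl, hac⟩, -⟩ := hGQ.existsUnique_collinear hl hal
  have hcb : b ≠ c := fun e => hab.2 (e ▸ hac)
  exact ⟨c, hcl, hac, hcb, l, hl, hbl, hcl⟩

/-- `{x, y}^⊥` in the usual notation for generalized quadrangles. -/
def trace (S : SlimPLS P) (x y : P) : Set P :=
  {z | S.Collinear x z ∧ S.Collinear y z}

theorem Opposite.exists_mem_trace (hGQ : S.IsGQ t) (hab : S.Opposite a b) :
    ∃ c₁ c₂, c₁ ≠ c₂ ∧ c₁ ∈ S.trace a b ∧ c₂ ∈ S.trace a b := by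
  obtain ⟨l₁, hl₁, l₂, hl₂, hb₁, hb₂, hne⟩ := hGQ.exists_two_lines b
  obtain ⟨c₁, hc₁, hac₁, hbc₁⟩ := hab.exists_common_neighbour_mem hGQ hl₁ hb₁
  obtain ⟨c₂, hc₂, hac₂, hbc₂⟩ := hab.exists_common_neighbour_mem hGQ hl₂ hb₂
  refine ⟨c₁, c₂, ?_, ⟨hac₁, hbc₁⟩, ⟨hac₂, hbc₂⟩⟩
  rintro rfl
  exact hne (S.unique_line _ hl₁ _ hl₂ b c₁ hbc₁.ne hb₁ hc₁ hb₂ hc₂)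

theorem ncard_collinear_not_collinear (hGQ : S.IsGQ t) (hab : S.Opposite a b) :
    {x | S.Collinear b x ∧ ¬ S.Collinear a x}.ncard = t + 1 := by
  rw [← hGQ.ncard_lines b]
  refine Set.ncard_congr (fun x hx => hx.1.2.choose) (fun x hx => ?_) (fun x x' hx hx' heq => ?_)
    (fun l ⟨hl, hbl⟩ => ?_)
  · exact ⟨hx.1.2.choose_spec.1, hx.1.2.choose_spec.2.1⟩
  · obtain ⟨hl, hbl, hxl⟩ := hx.1.2.choose_spec
    have hx'l : x' ∈ hx.1.2.choose := heq ▸ hx'.1.2.choose_spec.2.2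
    by_contra hxx'
    obtain ⟨z, hz, hl_eq⟩ := isLine_of_mem hl hbl hxl hx.1.ne
    rw [hl_eq] at hx'l
    simp only [Finset.mem_insert, Finset.mem_singleton] at hx'l
    rcases hx'l with h | h | h
    exacts [hx'.1.ne h.symm, hxx' h.symm, hx'.2 (h ▸ hz.collinear_of_not_collinear hGQ hab.2 hx.2)]
  · obtain ⟨c, hcl, hac, hbc⟩ := hab.exists_common_neighbour_mem hGQ hl hbl
    obtain ⟨z, hz, hl_eq⟩ := isLine_of_mem hl hbl hcl hbc.ne
    have hz' : S.Collinear b z ∧ ¬ S.Collinear a z :=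
      ⟨hz.collinear_left.symm, fun h => hab.1 (hz.rotate.eq_of_collinear hGQ hac h)⟩
    refine ⟨z, hz', ?_⟩
    obtain ⟨hl', hbl', hzl'⟩ := hz'.1.2.choose_spec
    exact S.unique_line _ hl' _ hl b z hz'.1.ne hbl' hzl' hbl (hl_eq ▸ by simp)

theorem exists_grid_completion (hGQ : S.IsGQ t) {p q c₁ c₂ x₁ x₂ y₁ y₂ : P}
    (hpq : S.Opposite p q) (hc : c₁ ≠ c₂) (hx₁ : S.IsLine p c₁ x₁) (hy₂ : S.IsLine q c₂ y₂)
    (hy₁ : S.IsLine q c₁ y₁) (hx₂ : S.IsLine p c₂ x₂) :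
    ∃ m, S.IsLine x₁ y₂ m ∧ S.IsLine y₁ x₂ m := by
  have hqx₁ : ¬ S.Collinear q x₁ := fun h =>
    hpq.1 (hx₁.rotate.eq_of_collinear hGQ hy₁.collinear h).symm
  have hc₂x₁ : ¬ S.Collinear c₂ x₁ := fun h =>
    hc (hx₁.swap.rotate.eq_of_collinear hGQ hx₂.collinear.symm h).symm
  have hpy₁ : ¬ S.Collinear p y₁ := fun h =>
    hpq.1 (hy₁.rotate.eq_of_collinear hGQ hx₁.collinear h)
  have hc₂y₁ : ¬ S.Collinear c₂ y₁ := fun h =>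
    hc (hy₁.swap.rotate.eq_of_collinear hGQ hy₂.collinear.symm h).symm
  obtain ⟨m, hm⟩ := (hy₂.collinear_of_not_collinear hGQ (collinear_comm.not.1 hqx₁)
    (collinear_comm.not.1 hc₂x₁)).exists_isLine
  have hy₁m : S.Collinear y₁ m := by
    refine hm.collinear_of_not_collinear hGQ (fun h => hpq.2 ?_) (fun h => hpy₁ ?_)
    · rw [hx₁.rotate.eq_of_collinear hGQ hy₁.collinear_right.symm h] at hy₁
      exact hy₁.collinear_left
    · rw [hy₂.swap.rotate.eq_of_collinear hGQ hy₁.collinear_left h]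
      exact hx₂.collinear
  have hx₂m : S.Collinear x₂ m := by
    refine hm.collinear_of_not_collinear hGQ (fun h => hpq.1 ?_) (fun h => hpq.2 ?_)
    · refine (hx₂.rotate.eq_of_collinear hGQ hy₂.collinear ?_).symm
      rw [hx₁.swap.rotate.eq_of_collinear hGQ hx₂.collinear_left h]
      exact hy₁.collinear
    · rw [← hy₂.rotate.eq_of_collinear hGQ hx₂.collinear_right.symm h]
      exact hx₂.collinear_left.symm
  obtain ⟨m', hm'⟩ := (hx₂.collinear_of_not_collinear hGQ (collinear_comm.not.1 hpy₁)
    (collinear_comm.not.1 hc₂y₁)).exists_isLine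
  exact ⟨m, hm, hm'.eq_of_collinear hGQ hy₁m.symm hx₂m.symm ▸ hm'⟩

namespace Rep

variable {R : Type*} [Group R] (ρ : S.Rep R)

theorem mul_self (x : P) : ρ.r x * ρ.r x = 1 := by
  rw [← pow_two, ← ρ.order_two x, pow_orderOf_eq_one]

theorem mul_self_mul (x : P) (g : R) : ρ.r x * (ρ.r x * g) = g := by
  rw [← mul_assoc, ρ.mul_self, one_mul]

theorem mul_eq (h : S.IsLine x y z) : ρ.r x * ρ.r y = ρ.r z :=
  ρ.line_rel _ h.2.2.2 x (by simp) y (by simp) z (by simp) h.1 h.2.1 h.2.2.1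

theorem commute_of_collinear (h : S.Collinear x y) : Commute (ρ.r x) (ρ.r y) := by
  obtain ⟨z, hz⟩ := h.exists_isLine
  exact (ρ.mul_eq hz).trans (ρ.mul_eq hz.swap).symm

theorem commute_of_opposite (hGQ : S.IsGQ t) (hpq : S.Opposite x y) :
    Commute (ρ.r x) (ρ.r y) := by
  obtain ⟨c₁, c₂, hc, ⟨hxc₁, hyc₁⟩, ⟨hxc₂, hyc₂⟩⟩ := hpq.exists_mem_trace hGQ
  obtain ⟨x₁, hx₁⟩ := hxc₁.exists_isLine
  obtain ⟨x₂, hx₂⟩ := hxc₂.exists_isLine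
  obtain ⟨y₁, hy₁⟩ := hyc₁.exists_isLine
  obtain ⟨y₂, hy₂⟩ := hyc₂.exists_isLine
  obtain ⟨m, hm₁, hm₂⟩ := exists_grid_completion hGQ hpq hc hx₁ hy₂ hy₁ hx₂
  have hgrid : ρ.r x * ρ.r c₁ * (ρ.r y * ρ.r c₂) = ρ.r y * ρ.r c₁ * (ρ.r x * ρ.r c₂) := by
    rw [ρ.mul_eq hx₁, ρ.mul_eq hy₂, ρ.mul_eq hm₁, ρ.mul_eq hy₁, ρ.mul_eq hx₂, ρ.mul_eq hm₂]
  simp only [← mul_assoc] at hgrid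
  have hxc := (ρ.commute_of_collinear hxc₁).eq
  have hyc := (ρ.commute_of_collinear hyc₁).eq
  refine mul_right_cancel (b := ρ.r c₁) ?_
  calc ρ.r x * ρ.r y * ρ.r c₁ = ρ.r x * ρ.r c₁ * ρ.r y := by rw [mul_assoc, hyc, ← mul_assoc]
    _ = ρ.r y * ρ.r c₁ * ρ.r x := mul_right_cancel hgrid
    _ = ρ.r y * ρ.r x * ρ.r c₁ := by rw [mul_assoc, ← hxc, ← mul_assoc]

theorem commute (hGQ : S.IsGQ t) (x y : P) : Commute (ρ.r x) (ρ.r y) := by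
  by_cases hxy : x = y
  · rw [hxy]
  by_cases hc : S.Collinear x y
  · exact ρ.commute_of_collinear hc
  · exact ρ.commute_of_opposite hGQ ⟨hxy, hc⟩

theorem collinear_of_mul_eq_of_isLine (hf : Function.Injective ρ.r) (hGQ : S.IsGQ t)
    (h : S.IsLine u v w) (hu : ¬ S.Collinear x u) (hv : ¬ S.Collinear x v)
    (he : ρ.r x * ρ.r y = ρ.r w) : S.Collinear x y := by
  obtain ⟨k, hk⟩ := (h.collinear_of_not_collinear hGQ hu hv).exists_isLine
  have hky : k = y := hf <| by rw [← ρ.mul_eq hk, ← he, ρ.mul_self_mul]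
  exact hky ▸ hk.collinear_left.symm

end Rep

theorem Rep.mul_comm {R : Type*} [Group R] (ρ : S.Rep R) (hGQ : S.IsGQ t) (g h : R) :
    g * h = h * g := by
  have := Subgroup.isMulCommutative_closure (k := Set.range ρ.r) <| by
    rintro _ ⟨x, rfl⟩ _ ⟨y, rfl⟩
    exact (ρ.commute hGQ x y).eq
  have hmem (g : R) : g ∈ Subgroup.closure (Set.range ρ.r) := ρ.gen ▸ Subgroup.mem_top g
  exact congrArg Subtype.val
    (mul_comm' (⟨g, hmem g⟩ : Subgroup.closure (Set.range ρ.r)) ⟨h, hmem h⟩)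

namespace Rep

variable {R : Type*} [CommGroup R] (ρ : S.Rep R)

theorem mul_eq_mul_swap (h : ρ.r a * ρ.r b = ρ.r x * ρ.r y) :
    ρ.r a * ρ.r x = ρ.r b * ρ.r y :=
  calc ρ.r a * ρ.r x = ρ.r a * ρ.r b * (ρ.r b * ρ.r x) := by rw [mul_assoc, ρ.mul_self_mul]
    _ = ρ.r b * ρ.r y * (ρ.r x * ρ.r x) := by rw [h]; ac_rfl
    _ = ρ.r b * ρ.r y := by rw [ρ.mul_self, mul_one]

theorem collinear_of_mul_eq_of_collinear (hf : Function.Injective ρ.r) (hGQ : S.IsGQ t)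
    (hu : S.Collinear u x) (hw : S.Collinear w x) (hv : ¬ S.Collinear v x)
    (he : ρ.r u * ρ.r v = ρ.r w) : S.Collinear u w := by
  by_cases hwv : S.Collinear w v
  · obtain ⟨k, hk⟩ := hwv.exists_isLine
    have hku : k = u := hf <| by rw [← ρ.mul_eq hk, ← he, mul_assoc, ρ.mul_self, mul_one]
    exact hku ▸ hk.collinear_left
  obtain ⟨p, hp⟩ := hw.exists_isLine
  obtain ⟨q, hq⟩ := hu.exists_isLine
  obtain ⟨k, hk⟩ := (hp.collinear_of_not_collinear hGQ (collinear_comm.not.1 hwv)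
    hv).exists_isLine
  have hkq : k = q := hf <| by
    rw [← ρ.mul_eq hk, ← ρ.mul_eq hp, ← ρ.mul_eq hq, ← he]
    calc ρ.r v * (ρ.r u * ρ.r v * ρ.r x) = ρ.r u * ρ.r x * (ρ.r v * ρ.r v) := by ac_rfl
      _ = ρ.r u * ρ.r x := by rw [ρ.mul_self, mul_one]
  subst hkq
  have hkw : k = w := hp.rotate.eq_of_collinear hGQ hq.collinear_right.symm hk.collinear_right.symm
  exact hkw ▸ hq.collinear_left.symm

theorem mul_ne_mul_of_not_collinear (hf : Function.Injective ρ.r) (hGQ : S.IsGQ t)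
    (hab : a ≠ b) (hc : c ∈ S.trace a b) (hcx : ¬ S.Collinear c x)
    (hax : ¬ S.Collinear a x) (hbx : ¬ S.Collinear b x) (hxy : ¬ S.Collinear x y) :
    ρ.r a * ρ.r b ≠ ρ.r x * ρ.r y := by
  intro he
  obtain ⟨a', ha'⟩ := hc.1.exists_isLine
  obtain ⟨b', hb'⟩ := hc.2.exists_isLine
  have hxa' := ha'.collinear_of_not_collinear hGQ (collinear_comm.not.1 hax)
    (collinear_comm.not.1 hcx)
  have hxb' := hb'.collinear_of_not_collinear hGQ (collinear_comm.not.1 hbx)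
    (collinear_comm.not.1 hcx)
  obtain ⟨s, hs⟩ := hxa'.symm.exists_isLine
  have hrel : ρ.r b' * ρ.r y = ρ.r s := by
    rw [← ρ.mul_eq hs, ← ρ.mul_eq ha', ← ρ.mul_eq hb']
    calc ρ.r b * ρ.r c * ρ.r y = ρ.r c * (ρ.r b * ρ.r y) := by ac_rfl
      _ = ρ.r c * (ρ.r a * ρ.r x) := by rw [(ρ.mul_eq_mul_swap he).symm]
      _ = ρ.r a * ρ.r c * ρ.r x := by ac_rfl
  have hb's := ρ.collinear_of_mul_eq_of_collinear hf hGQ hxb'.symm hs.collinear_right.symm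
    (collinear_comm.not.1 hxy) hrel
  have ha'b' : b' = a' := hs.rotate.eq_of_collinear hGQ hxb'.symm hb's
  exact hab (ha'.rotate.unique (ha'b' ▸ hb'.rotate))

theorem mul_ne_mul_of_mem_trace (hf : Function.Injective ρ.r) (hGQ : S.IsGQ t) {c₁ c₂ : P}
    (hc : c₁ ≠ c₂) (ha : a ∈ S.trace c₁ c₂) (hb : b ∈ S.trace c₁ c₂)
    (hx : x ∈ S.trace c₁ c₂) (hy : y ∈ S.trace c₁ c₂)
    (hab : a ≠ b) (hax : a ≠ x) (hbx : b ≠ x) (hay : a ≠ y) (hby : b ≠ y) (hxy : x ≠ y) :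
    ρ.r a * ρ.r b ≠ ρ.r x * ρ.r y := by
  intro he
  obtain ⟨a₁, ha₁⟩ := ha.1.symm.exists_isLine
  obtain ⟨b₂, hb₂⟩ := hb.2.symm.exists_isLine
  have hb₂a : ¬ S.Collinear b₂ a := fun h => hab (hb₂.rotate.eq_of_collinear hGQ ha.2.symm h.symm)
  have hb₂c₁ : ¬ S.Collinear b₂ c₁ := fun h =>
    hc (hb₂.swap.rotate.eq_of_collinear hGQ hb.1 h.symm)
  obtain ⟨m, hm⟩ := (ha₁.collinear_of_not_collinear hGQ hb₂a hb₂c₁).symm.exists_isLine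
  have hm_of {p : P} (hp : p ∈ S.trace c₁ c₂) (hpa : a ≠ p) (hpb : b ≠ p) :
      S.Collinear p m :=
    hm.collinear_of_not_collinear hGQ
      (fun h => hpa (ha₁.rotate.eq_of_collinear hGQ hp.1.symm h).symm)
      (fun h => hpb (hb₂.rotate.eq_of_collinear hGQ hp.2.symm h).symm)
  obtain ⟨n, hn⟩ := (hm_of hx hax hbx).exists_isLine
  obtain ⟨y₂, hy₂⟩ := hy.2.symm.exists_isLine
  have hny : ¬ S.Collinear n y := fun h =>
    hxy (hn.rotate.eq_of_collinear hGQ (hm_of hy hay hby) h.symm).symm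
  have hrel : ρ.r c₁ * ρ.r n = ρ.r y₂ := by
    rw [← ρ.mul_eq hn, ← ρ.mul_eq hm, ← ρ.mul_eq ha₁, ← ρ.mul_eq hb₂, ← ρ.mul_eq hy₂]
    calc ρ.r c₁ * (ρ.r x * (ρ.r a * ρ.r c₁ * (ρ.r b * ρ.r c₂)))
        = ρ.r c₁ * ρ.r c₁ * (ρ.r x * (ρ.r a * ρ.r b)) * ρ.r c₂ := by ac_rfl
      _ = ρ.r y * ρ.r c₂ := by rw [ρ.mul_self, one_mul, he, ρ.mul_self_mul]
  have hc₁y₂ := ρ.collinear_of_mul_eq_of_collinear hf hGQ hy.1 hy₂.collinear_left hny hrel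
  exact hc (hy₂.swap.rotate.eq_of_collinear hGQ hy.1 hc₁y₂)

theorem mul_ne_mul_of_opposite (hf : Function.Injective ρ.r) (hGQ : S.IsGQ t)
    (hab : S.Opposite a b) (hax : S.Opposite a x) (hbx : S.Opposite b x)
    (hay : S.Opposite a y) (hby : S.Opposite b y) (hxy : S.Opposite x y) :
    ρ.r a * ρ.r b ≠ ρ.r x * ρ.r y := by
  obtain ⟨c₁, c₂, hc, hc₁, hc₂⟩ := hab.exists_mem_trace hGQ
  by_cases hx : x ∈ S.trace c₁ c₂
  · by_cases hy : y ∈ S.trace c₁ c₂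
    · exact ρ.mul_ne_mul_of_mem_trace hf hGQ hc ⟨hc₁.1.symm, hc₂.1.symm⟩
        ⟨hc₁.2.symm, hc₂.2.symm⟩ hx hy hab.1 hax.1 hbx.1 hay.1 hby.1 hxy.1
    rw [_root_.mul_comm (ρ.r x)]
    rcases not_and_or.1 hy with h | h
    · exact ρ.mul_ne_mul_of_not_collinear hf hGQ hab.1 hc₁ h hay.2 hby.2 hxy.symm.2
    · exact ρ.mul_ne_mul_of_not_collinear hf hGQ hab.1 hc₂ h hay.2 hby.2 hxy.symm.2
  rcases not_and_or.1 hx with h | h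
  · exact ρ.mul_ne_mul_of_not_collinear hf hGQ hab.1 hc₁ h hax.2 hbx.2 hxy.2
  · exact ρ.mul_ne_mul_of_not_collinear hf hGQ hab.1 hc₂ h hax.2 hbx.2 hxy.2

theorem eq_or_collinear_of_mul_eq_mul (hf : Function.Injective ρ.r) (hGQ : S.IsGQ t)
    (hab : S.Opposite a b) (hax : S.Opposite a x) (hby : S.Opposite b y)
    (he : ρ.r a * ρ.r x = ρ.r b * ρ.r y) : x = b ∨ S.Collinear b x := by
  by_contra! h
  obtain ⟨hxb, hbx⟩ := h
  have hab_xy : ρ.r a * ρ.r b = ρ.r x * ρ.r y := ρ.mul_eq_mul_swap he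
  have hay_bx : ρ.r a * ρ.r y = ρ.r x * ρ.r b :=
    ρ.mul_eq_mul_swap (he.trans (_root_.mul_comm _ _))
  have hay : a ≠ y := by
    rintro rfl
    exact hxb (hf (mul_left_cancel (he.trans (_root_.mul_comm _ _))))
  have hxy : x ≠ y := by
    rintro rfl
    exact hab.1 (hf (mul_right_cancel he))
  by_cases hcay : S.Collinear a y
  · obtain ⟨z, hz⟩ := hcay.exists_isLine
    refine hbx (ρ.collinear_of_mul_eq_of_isLine hf hGQ hz hab.symm.2 hby.2 ?_)
    rw [← ρ.mul_eq hz, hay_bx, _root_.mul_comm]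
  by_cases hcxy : S.Collinear x y
  · obtain ⟨z, hz⟩ := hcxy.exists_isLine
    exact hab.2 (ρ.collinear_of_mul_eq_of_isLine hf hGQ hz hax.2 hcay
      (hab_xy.trans (ρ.mul_eq hz)))
  exact ρ.mul_ne_mul_of_opposite hf hGQ hab hax ⟨hxb.symm, hbx⟩ ⟨hay, hcay⟩ hby ⟨hxy, hcxy⟩
    hab_xy

theorem exists_opposite_mul_eq_mul (hGQ : S.IsGQ t) (hab : S.Opposite a b)
    (hbx : S.Collinear b x) (hax : ¬ S.Collinear a x) :
    ∃ y, S.Opposite b y ∧ ρ.r a * ρ.r x = ρ.r b * ρ.r y := by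
  obtain ⟨z, hz⟩ := hbx.exists_isLine
  obtain ⟨y, hy⟩ := (hz.collinear_of_not_collinear hGQ hab.2 hax).exists_isLine
  refine ⟨y, ⟨?_, fun h => hab.1 (hy.rotate.eq_of_collinear hGQ hz.collinear_left.symm h).symm⟩, ?_⟩
  · rintro rfl
    exact hab.2 hy.collinear_left.symm
  · rw [← ρ.mul_eq hy, ← ρ.mul_eq hz]
    calc ρ.r a * ρ.r x = ρ.r b * ρ.r b * (ρ.r a * ρ.r x) := by rw [ρ.mul_self, one_mul]
      _ = ρ.r b * (ρ.r a * (ρ.r b * ρ.r x)) := by ac_rfl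

theorem inter_eq_image (hf : Function.Injective ρ.r) (hGQ : S.IsGQ t) (hab : S.Opposite a b) :
    {g : R | ∃ x : P, x ≠ a ∧ ¬ S.Collinear a x ∧ g = ρ.r a * ρ.r x} ∩
      {g : R | ∃ x : P, x ≠ b ∧ ¬ S.Collinear b x ∧ g = ρ.r b * ρ.r x} =
      (ρ.r a * ρ.r ·) '' insert b {x | S.Collinear b x ∧ ¬ S.Collinear a x} := by
  ext g
  simp only [Set.mem_inter_iff, Set.mem_ofPred_eq, Set.mem_image, Set.mem_insert_iff]
  constructor
  · rintro ⟨⟨x, hxa, hax, rfl⟩, y, hyb, hby, he⟩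
    refine ⟨x, ?_, rfl⟩
    rcases ρ.eq_or_collinear_of_mul_eq_mul hf hGQ hab ⟨hxa.symm, hax⟩ ⟨hyb.symm, hby⟩ he with h | h
    exacts [Or.inl h, Or.inr ⟨h, hax⟩]
  · rintro ⟨x, hx | ⟨hbx, hax⟩, rfl⟩
    · subst hx
      exact ⟨⟨x, hab.1.symm, hab.2, rfl⟩, a, hab.1, hab.symm.2, _root_.mul_comm _ _⟩
    · obtain ⟨y, hby, he⟩ := ρ.exists_opposite_mul_eq_mul hGQ hab hbx hax
      refine ⟨⟨x, ?_, hax, rfl⟩, y, hby.1.symm, hby.2, he⟩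
      rintro rfl
      exact hab.2 hbx.symm

end Rep

end SlimPLS

/-- For a faithful representation of a `(2,t)`-GQ and
non-collinear points `a, b`, the sets `A = {r_a r_x : x ≠ a, x ≁ a}` and
`B = {r_b r_x : x ≠ b, x ≁ b}` satisfy `|A ∩ B| = t + 2`. -/
theorem gq_rep_intersection_card {P : Type*} (S : SlimPLS P) {t : ℕ}
    (hGQ : S.IsGQ t) {R : Type*} [Group R] (ρ : S.Rep R)
    (hf : Function.Injective ρ.r)
    (a b : P) (hab : a ≠ b) (hnc : ¬ S.Collinear a b) :
    ({g : R | ∃ x : P, x ≠ a ∧ ¬ S.Collinear a x ∧ g = ρ.r a * ρ.r x} ∩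
      {g : R | ∃ x : P, x ≠ b ∧ ¬ S.Collinear b x ∧ g = ρ.r b * ρ.r x}).ncard
      = t + 2 := by
  let _ : CommGroup R := { ‹Group R› with mul_comm := ρ.mul_comm hGQ }
  have hN := SlimPLS.ncard_collinear_not_collinear hGQ ⟨hab, hnc⟩
  rw [ρ.inter_eq_image hf hGQ ⟨hab, hnc⟩,
    Set.ncard_image_of_injective _ fun x y h => hf (mul_left_cancel h),
    Set.ncard_insert_of_notMem (fun h => h.1.ne rfl) (Set.finite_of_ncard_ne_zero (by omega)), hN]
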